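/- Let d ≥ 1, let u : ℝ^d → ℂ be a Schwartz function, and let f : ℝ^d → ℂ be continuously differentiable with f and its gradient ∇f bounded. Then −Re ∫_{ℝ^d} Δu(x) · conj( −i u(x) f(x) ) dx = ∫_{ℝ^d} |∇u(x)|² Im( f(x) ) dx − ∫_{ℝ^d} Im( conj(u(x)) · ∇u(x) · conj(∇f(x)) ) dx, where ∇u · conj(∇f) denotes Σⱼ ∂ⱼu · conj(∂ⱼ f) and |∇u|² = Σⱼ |∂ⱼ u|². -/

import Mathlib

/-!
For each direction `v`, one integration by parts moves a derivative of `∂ᵥ²u` onto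
`conj (u f)`, turning `∫ conj (u f) ∂ᵥ²u` into
`-∫ conj u · conj (∂ᵥ f) · ∂ᵥ u - ∫ conj f · |∂ᵥ u|²`; no boundary terms arise because every
integrand is a bounded function times a Schwartz function. Summing over the coordinate
directions and using `-Re (z · conj (-i w)) = Im (z · conj w)` gives the identity after taking
imaginary parts.
-/

open MeasureTheory Real Complex ComplexConjugate
open scoped ENNReal

/-- The Laplacian `Δu = Σⱼ ∂ⱼ²u` on `ℝ^d`. -/
noncomputable def laplacianE (d : ℕ) (u : EuclideanSpace ℝ (Fin d) → ℂ)
    (x : EuclideanSpace ℝ (Fin d)) : ℂ :=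
  ∑ j : Fin d,
    fderiv ℝ (fun y => fderiv ℝ u y (EuclideanSpace.single j 1)) x (EuclideanSpace.single j 1)

open LineDeriv

theorem integral_im_finsetSum {ι α : Type*} [MeasurableSpace α] {ν : Measure α} {s : Finset ι}
    {F : ι → α → ℂ} (hF : ∀ i ∈ s, Integrable (F i) ν) :
    ∫ x, (∑ i ∈ s, F i x).im ∂ν = (∑ i ∈ s, ∫ x, F i x ∂ν).im := by
  rw [← integral_finsetSum s hF]
  exact integral_im (integrable_finsetSum s hF)

theorem MeasureTheory.MemLp.conj {𝕜 α : Type*} [RCLike 𝕜] [MeasurableSpace α] {ν : Measure α}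
    {p : ℝ≥0∞} {f : α → 𝕜} (hf : MemLp f p ν) : MemLp (fun x => conj (f x)) p ν :=
  hf.star

section

variable {E : Type*} [NormedAddCommGroup E] [NormedSpace ℝ E] [MeasurableSpace E] [BorelSpace E]
  {μ : Measure E}

theorem memLp_top_fderiv_apply {F : Type*} [NormedAddCommGroup F] [NormedSpace ℝ F]
    [CompleteSpace F] [SecondCountableTopology F] [MeasurableSpace F] [BorelSpace F]
    {f : E → F} {M : ℝ} (hM : ∀ x, ‖fderiv ℝ f x‖ ≤ M) (v : E) :
    MemLp (fun x => fderiv ℝ f x v) ∞ μ :=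
  memLp_top_of_bound (measurable_fderiv_apply_const ℝ f v).aestronglyMeasurable (M * ‖v‖)
    (ae_of_all _ fun x =>
      ((fderiv ℝ f x).le_opNorm v).trans (mul_le_mul_of_nonneg_right (hM x) (norm_nonneg v)))

variable [FiniteDimensional ℝ E] [μ.IsAddHaarMeasure]

theorem SchwartzMap.integral_mul_fderiv_eq_neg_fderiv_mul {g : E → ℂ} (hg : Differentiable ℝ g)
    (hg_top : MemLp g ∞ μ) {v : E} (hg'_top : MemLp (fun x => fderiv ℝ g x v) ∞ μ)
    (φ : SchwartzMap E ℂ) :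
    ∫ x, g x * fderiv ℝ φ x v ∂μ = -∫ x, fderiv ℝ g x v * φ x ∂μ :=
  integral_mul_fderiv_eq_neg_fderiv_mul_of_integrable
    (φ.integrable.mul_of_top_right hg'_top) ((∂_{v} φ).integrable.mul_of_top_right hg_top)
    (φ.integrable.mul_of_top_right hg_top) (fun x _ => hg x) (fun _ _ => φ.differentiableAt)

theorem SchwartzMap.integral_conj_mul_mul_fderiv_fderiv (u : SchwartzMap E ℂ) {f : E → ℂ}
    (hf : Differentiable ℝ f) (hf_top : MemLp f ∞ μ) {v : E}
    (hf'_top : MemLp (fun x => fderiv ℝ f x v) ∞ μ) :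
    ∫ x, conj (u x * f x) * fderiv ℝ (fun y => fderiv ℝ u y v) x v ∂μ =
      -(∫ x, conj (u x) * conj (fderiv ℝ f x v) * fderiv ℝ u x v ∂μ) -
        ∫ x, conj (f x) * conj (fderiv ℝ u x v) * fderiv ℝ u x v ∂μ := by
  have hg_deriv : ∀ x, HasFDerivAt (fun y => conj (u y * f y))
      ((starL' ℝ : ℂ ≃L⋆[ℝ] ℂ).toContinuousLinearMap.comp
        (u x • fderiv ℝ f x + f x • fderiv ℝ u x)) x :=
    fun x => ((u.hasFDerivAt x).mul (hf x).hasFDerivAt).star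
  have hg' : ∀ x, fderiv ℝ (fun y => conj (u y * f y)) x v =
      conj (u x) * conj (fderiv ℝ f x v) + conj (f x) * conj (fderiv ℝ u x v) := by
    intro x
    rw [(hg_deriv x).fderiv]
    simp
  have hcross_top : MemLp (fun x => conj (u x) * conj (fderiv ℝ f x v)) ∞ μ :=
    hf'_top.conj.mul' (u.memLp_top μ).conj
  have hkin_top : MemLp (fun x => conj (f x) * conj (fderiv ℝ u x v)) ∞ μ :=
    ((∂_{v} u).memLp_top μ).conj.mul' hf_top.conj
  have hg_top : MemLp (fun x => conj (u x * f x)) ∞ μ := (hf_top.mul' (u.memLp_top μ)).conj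
  have hg'_top : MemLp (fun x => fderiv ℝ (fun y => conj (u y * f y)) x v) ∞ μ := by
    rw [funext hg']
    exact hcross_top.add hkin_top
  calc ∫ x, conj (u x * f x) * fderiv ℝ (fun y => fderiv ℝ u y v) x v ∂μ
      = -∫ x, fderiv ℝ (fun y => conj (u y * f y)) x v * fderiv ℝ u x v ∂μ :=
        (∂_{v} u).integral_mul_fderiv_eq_neg_fderiv_mul (fun x => (hg_deriv x).differentiableAt)
          hg_top hg'_top
    _ = -∫ x, (conj (u x) * conj (fderiv ℝ f x v) * fderiv ℝ u x v +
          conj (f x) * conj (fderiv ℝ u x v) * fderiv ℝ u x v) ∂μ := by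
        simp only [hg', add_mul]
    _ = _ := by
        rw [integral_add ((∂_{v} u).integrable.mul_of_top_right hcross_top)
          ((∂_{v} u).integrable.mul_of_top_right hkin_top)]
        ring

variable {ι : Type*} [Fintype ι]

noncomputable def laplacianAlong (v : ι → E) (u : E → ℂ) (x : E) : ℂ :=
  ∑ i, fderiv ℝ (fun y => fderiv ℝ u y (v i)) x (v i)

theorem SchwartzMap.neg_integral_re_laplacianAlong_mul_conj (u : SchwartzMap E ℂ) (v : ι → E)
    {f : E → ℂ} (hf : Differentiable ℝ f) (hf_top : MemLp f ∞ μ)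
    (hf'_top : ∀ i, MemLp (fun x => fderiv ℝ f x (v i)) ∞ μ) :
    -(∫ x, (laplacianAlong v u x * conj (-I * u x * f x)).re ∂μ) =
      (∫ x, (∑ i, ‖fderiv ℝ u x (v i)‖ ^ 2) * (f x).im ∂μ) -
        ∫ x, (conj (u x) * ∑ i, fderiv ℝ u x (v i) * conj (fderiv ℝ f x (v i))).im ∂μ := by
  have hsecond_int : ∀ i ∈ Finset.univ, Integrable
      (fun x => conj (u x * f x) * fderiv ℝ (fun y => fderiv ℝ u y (v i)) x (v i)) μ :=
    fun i _ => (∂_{v i} (∂_{v i} u)).integrable.mul_of_top_right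
      (hf_top.mul' (u.memLp_top μ)).conj
  have hcross_int : ∀ i ∈ Finset.univ, Integrable
      (fun x => conj (u x) * conj (fderiv ℝ f x (v i)) * fderiv ℝ u x (v i)) μ :=
    fun i _ => (∂_{v i} u).integrable.mul_of_top_right
      ((hf'_top i).conj.mul' (u.memLp_top μ).conj)
  have hkin_int : ∀ i ∈ Finset.univ, Integrable
      (fun x => conj (f x) * conj (fderiv ℝ u x (v i)) * fderiv ℝ u x (v i)) μ :=
    fun i _ => (∂_{v i} u).integrable.mul_of_top_right
      (((∂_{v i} u).memLp_top μ).conj.mul' hf_top.conj)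
  have hsecond : -(∫ x, (laplacianAlong v u x * conj (-I * u x * f x)).re ∂μ) =
      (∑ i, ∫ x, conj (u x * f x) * fderiv ℝ (fun y => fderiv ℝ u y (v i)) x (v i) ∂μ).im := by
    rw [← integral_im_finsetSum hsecond_int, ← integral_neg]
    congr 1 with x
    have hconj : conj (-I * u x * f x) = I * conj (u x * f x) := by simp [mul_assoc]
    rw [laplacianAlong, ← Finset.mul_sum, hconj, mul_left_comm, I_mul_re, neg_neg, mul_comm]
  have hkin : ∫ x, (∑ i, ‖fderiv ℝ u x (v i)‖ ^ 2) * (f x).im ∂μ =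
      -(∑ i, ∫ x, conj (f x) * conj (fderiv ℝ u x (v i)) * fderiv ℝ u x (v i) ∂μ).im := by
    rw [← integral_im_finsetSum hkin_int, ← integral_neg]
    congr 1 with x
    simp only [mul_assoc, conj_mul', ← Finset.mul_sum, ← ofReal_pow, ← ofReal_sum, mul_im,
      ofReal_re, ofReal_im, conj_im]
    ring
  have hcross : ∫ x, (conj (u x) * ∑ i, fderiv ℝ u x (v i) * conj (fderiv ℝ f x (v i))).im ∂μ =
      (∑ i, ∫ x, conj (u x) * conj (fderiv ℝ f x (v i)) * fderiv ℝ u x (v i) ∂μ).im := by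
    rw [← integral_im_finsetSum hcross_int]
    congr 1 with x
    rw [Finset.mul_sum]
    exact congrArg im (Finset.sum_congr rfl fun i _ => by ring)
  rw [hsecond, hkin, hcross,
    Finset.sum_congr rfl fun i _ => u.integral_conj_mul_mul_fderiv_fderiv hf hf_top (hf'_top i)]
  simp only [Finset.sum_sub_distrib, Finset.sum_neg_distrib, sub_im, neg_im]
  ring

end

theorem kinetic_drift_integration_by_parts_general
    (d : ℕ) (u : SchwartzMap (EuclideanSpace ℝ (Fin d)) ℂ)
    (f : EuclideanSpace ℝ (Fin d) → ℂ) (hf : ContDiff ℝ 1 f)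
    (hfb : ∃ M : ℝ, ∀ x, ‖f x‖ ≤ M)
    (hdfb : ∃ M : ℝ, ∀ x, ‖fderiv ℝ f x‖ ≤ M) :
    -(∫ x : EuclideanSpace ℝ (Fin d),
        (laplacianE d ⇑u x * conj (-Complex.I * u x * f x)).re) =
      (∫ x : EuclideanSpace ℝ (Fin d),
        (∑ j : Fin d, ‖fderiv ℝ (⇑u) x (EuclideanSpace.single j 1)‖ ^ 2) *
          (f x).im) -
      ∫ x : EuclideanSpace ℝ (Fin d),
        (conj (u x) *
          ∑ j : Fin d, fderiv ℝ (⇑u) x (EuclideanSpace.single j 1) *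
            conj (fderiv ℝ f x (EuclideanSpace.single j 1))).im := by
  obtain ⟨M, hM⟩ := hfb
  obtain ⟨M', hM'⟩ := hdfb
  exact u.neg_integral_re_laplacianAlong_mul_conj (fun j => EuclideanSpace.single j 1)
    (hf.differentiable one_ne_zero)
    (memLp_top_of_bound hf.continuous.aestronglyMeasurable M (ae_of_all _ hM))
    fun j => memLp_top_fderiv_apply hM' _

/-- Integration by parts identity for the kinetic-energy drift term:
`−Re ∫ Δu conj(−iuf) dx = ∫ |∇u|² Im f dx − ∫ Im(conj(u) ∇u·conj(∇f)) dx`. -/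
theorem kinetic_drift_integration_by_parts
    (d : ℕ) (hd : 1 ≤ d) (u : SchwartzMap (EuclideanSpace ℝ (Fin d)) ℂ)
    (f : EuclideanSpace ℝ (Fin d) → ℂ) (hf : ContDiff ℝ 1 f)
    (hfb : ∃ M : ℝ, ∀ x, ‖f x‖ ≤ M)
    (hdfb : ∃ M : ℝ, ∀ x, ‖fderiv ℝ f x‖ ≤ M) :
    -(∫ x : EuclideanSpace ℝ (Fin d),
        (laplacianE d ⇑u x * conj (-Complex.I * u x * f x)).re) =
      (∫ x : EuclideanSpace ℝ (Fin d),
        (∑ j : Fin d, ‖fderiv ℝ (⇑u) x (EuclideanSpace.single j 1)‖ ^ 2) *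
          (f x).im) -
      ∫ x : EuclideanSpace ℝ (Fin d),
        (conj (u x) *
          ∑ j : Fin d, fderiv ℝ (⇑u) x (EuclideanSpace.single j 1) *
            conj (fderiv ℝ f x (EuclideanSpace.single j 1))).im :=
  kinetic_drift_integration_by_parts_general d u f hf hfb hdfb
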